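/- For n ∈ ℕ and 0 ≤ k ≤ n, the norms ‖·‖_{Han_k} and ‖·‖_{P_{d,k}⊙P_{d,n-k}} on P_{d,n} are dual to each other with respect to the Cauchy pairing: the map q ↦ ⟨·,q⟩₂ is a conjugate-linear isometric isomorphism from (P_{d,n}, ‖·‖_{Han_k}) onto the dual of (P_{d,n}, ‖·‖_{P_{d,k}⊙P_{d,n-k}}), and likewise with the two norms interchanged; in particular ‖q‖_{Han_k} = sup{|⟨h,q⟩₂| : h ∈ P_{d,n}, ‖h‖_{P_{d,k}⊙P_{d,n-k}} ≤ 1}. -/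

import Mathlib

noncomputable section
open scoped ComplexOrder
namespace WP

abbrev MvP (d : ℕ) := MvPolynomial (Fin d) ℂ

/-- The Cauchy pairing `⟨p,q⟩₂ = ∑_α a_α conj(b_α)` of coefficient vectors. -/
def pairing {d : ℕ} (p q : MvP d) : ℂ :=
  ∑ α ∈ p.support, p.coeff α * (starRingEnd ℂ) (q.coeff α)

/-- The Hardy norm `‖p‖₂`: the `ℓ²` norm of the coefficient vector. -/
def norm2 {d : ℕ} (p : MvP d) : ℝ :=
  Real.sqrt (∑ α ∈ p.support, ‖p.coeff α‖ ^ 2)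

/-- The weak product norm `‖p‖_{P_{d,k} ⊙ P_{d,l}}`. -/
def wpNorm (d k l : ℕ) (p : MvP d) : ℝ :=
  sInf {x : ℝ | ∃ (m : ℕ) (f g : Fin m → MvP d),
    (∀ j, (f j).IsHomogeneous k) ∧ (∀ j, (g j).IsHomogeneous l) ∧
    p = ∑ j, f j * g j ∧ x = ∑ j, norm2 (f j) * norm2 (g j)}

/-- The weak product norm `‖p‖_{Z_d ⊙ P_{d,k} ⊙ P_{d,l}}`. -/
def zwpNorm (d k l : ℕ) (p : MvP d) : ℝ :=
  sInf {x : ℝ | ∃ f : Fin d → MvP d,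
    (∀ i, (f i).IsHomogeneous (k + l)) ∧
    p = ∑ i, MvPolynomial.X i * f i ∧ x = ∑ i, wpNorm d k l (f i)}

/-- `|||p|||₁ = max_{0 ≤ k ≤ n} ‖p‖_{P_{d,k} ⊙ P_{d,n-k}}`. -/
def triple1 (d n : ℕ) (p : MvP d) : ℝ :=
  ⨆ k : Fin (n + 1), wpNorm d k (n - k) p

/-- `|||p|||₂ = max_{0 ≤ k ≤ n-1} ‖p‖_{Z_d ⊙ P_{d,k} ⊙ P_{d,n-k-1}}`. -/
def triple2 (d n : ℕ) (p : MvP d) : ℝ :=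
  ⨆ k : Fin n, zwpNorm d k (n - 1 - k) p

/-- `f̂`: the polynomial whose coefficients are the conjugates of those of `f`. -/
def hatp {d : ℕ} (f : MvP d) : MvP d := MvPolynomial.map (starRingEnd ℂ) f

/-- The Hankel norm `‖q‖_{Han_k} = ‖Γ_q|_{P_{d,k}}‖` for `q ∈ P_{d,n}`, computed via
the defining property `⟨Γ_q f, g⟩₂ = ⟨q, f̂ g⟩₂` (and the fact that `Γ_q` maps
`P_{d,k}` into `P_{d,n-k}`). -/
def hanNorm (d n k : ℕ) (q : MvP d) : ℝ :=
  sSup {x : ℝ | ∃ f g : MvP d, f.IsHomogeneous k ∧ g.IsHomogeneous (n - k) ∧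
    norm2 f ≤ 1 ∧ norm2 g ≤ 1 ∧ x = ‖pairing q (hatp f * g)‖}

/-!
Write `n = k + l` and let `E` be `P_{d,n}` normed by `‖·‖_{P_{d,k} ⊙ P_{d,l}}`. This is a genuine
norm because each coefficient of `f g` is at most `‖f‖₂ ‖g‖₂` (Cauchy–Schwarz), whence
`|h_α| ≤ ‖h‖_{P_{d,k} ⊙ P_{d,l}}`. Testing `Λ_q = ⟨·, q⟩₂` on the products `f̂ g`, and on the
decompositions `h = ∑ f_j g_j`, gives `‖Λ_q‖_{E*} = ‖q‖_{Han_k}`. The bilinear form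
`∑_α p_α m_α` is nondegenerate on the finite-dimensional space `E`, so every functional on `E`
is some `Λ_q`. The first formula is then the definition of the dual norm of `Λ_q`, and the
second one is the isometric embedding of `E` into its double dual.
-/

open MvPolynomial Finset ComplexConjugate
open scoped Pointwise

section Pairing

variable {d : ℕ}

lemma pairing_eq_sum_of_support_subset {p : MvP d} (q : MvP d) {s : Finset (Fin d →₀ ℕ)}
    (hs : p.support ⊆ s) : pairing p q = ∑ α ∈ s, p.coeff α * conj (q.coeff α) :=
  sum_subset hs fun α _ hα => by rw [notMem_support_iff.mp hα, zero_mul]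

lemma pairing_add_left (p p' q : MvP d) : pairing (p + p') q = pairing p q + pairing p' q := by
  classical
  rw [pairing_eq_sum_of_support_subset q support_add,
    pairing_eq_sum_of_support_subset q subset_union_left,
    pairing_eq_sum_of_support_subset q subset_union_right, ← sum_add_distrib]
  simp only [coeff_add, add_mul]

lemma pairing_smul_left (c : ℂ) (p q : MvP d) : pairing (c • p) q = c * pairing p q := by
  rw [pairing_eq_sum_of_support_subset q support_smul, pairing, mul_sum]
  simp only [coeff_smul, smul_eq_mul, mul_assoc]

def pairingₗ (q : MvP d) : MvP d →ₗ[ℂ] ℂ where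
  toFun p := pairing p q
  map_add' p p' := pairing_add_left p p' q
  map_smul' c p := pairing_smul_left c p q

lemma pairingₗ_apply (p q : MvP d) : pairingₗ q p = pairing p q := rfl

lemma conj_pairing (p q : MvP d) : conj (pairing p q) = pairing q p := by
  classical
  rw [pairing_eq_sum_of_support_subset q (subset_union_left (s₂ := q.support)),
    pairing_eq_sum_of_support_subset p (subset_union_right (s₁ := p.support)), map_sum]
  exact sum_congr rfl fun _ _ => by rw [map_mul, Complex.conj_conj, mul_comm]

lemma norm_pairing_comm (p q : MvP d) : ‖pairing p q‖ = ‖pairing q p‖ := by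
  rw [← conj_pairing, Complex.norm_conj]

lemma pairing_add_right (p q q' : MvP d) : pairing p (q + q') = pairing p q + pairing p q' := by
  rw [← conj_pairing, pairing_add_left, map_add, conj_pairing, conj_pairing]

lemma pairing_smul_right (c : ℂ) (p q : MvP d) : pairing p (c • q) = conj c * pairing p q := by
  rw [← conj_pairing, pairing_smul_left, map_mul, conj_pairing]

lemma norm2_sq (p : MvP d) : norm2 p ^ 2 = ∑ α ∈ p.support, ‖p.coeff α‖ ^ 2 :=
  Real.sq_sqrt (by positivity)

lemma norm2_nonneg (p : MvP d) : 0 ≤ norm2 p := Real.sqrt_nonneg _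

lemma pairing_self (p : MvP d) : pairing p p = ((norm2 p ^ 2 : ℝ) : ℂ) := by
  rw [norm2_sq, pairing]
  push_cast
  exact sum_congr rfl fun α _ => Complex.mul_conj' _

lemma sum_norm_coeff_sq_le (p : MvP d) (s : Finset (Fin d →₀ ℕ)) :
    ∑ α ∈ s, ‖p.coeff α‖ ^ 2 ≤ norm2 p ^ 2 := by
  classical
  rw [norm2_sq]
  calc ∑ α ∈ s, ‖p.coeff α‖ ^ 2 ≤ ∑ α ∈ s ∪ p.support, ‖p.coeff α‖ ^ 2 :=
        sum_le_sum_of_subset_of_nonneg subset_union_left fun _ _ _ => by positivity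
    _ = ∑ α ∈ p.support, ‖p.coeff α‖ ^ 2 :=
        (sum_subset subset_union_right fun α _ hα => by simp [notMem_support_iff.mp hα]).symm

lemma norm_coeff_le_norm2 (p : MvP d) (α : Fin d →₀ ℕ) : ‖p.coeff α‖ ≤ norm2 p := by
  have h := sum_norm_coeff_sq_le p {α}
  rwa [sum_singleton, sq_le_sq₀ (norm_nonneg _) (norm2_nonneg p)] at h

lemma norm2_eq_zero_iff {p : MvP d} : norm2 p = 0 ↔ p = 0 := by
  refine ⟨fun h => MvPolynomial.ext _ _ fun α => ?_, fun h => by simp [h, norm2]⟩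
  simpa [h] using norm_coeff_le_norm2 p α

lemma pairing_self_eq_zero {p : MvP d} : pairing p p = 0 ↔ p = 0 := by
  rw [pairing_self, Complex.ofReal_eq_zero, pow_eq_zero_iff two_ne_zero, norm2_eq_zero_iff]

lemma norm2_smul (c : ℂ) (p : MvP d) : norm2 (c • p) = ‖c‖ * norm2 p := by
  have h : ((norm2 (c • p) ^ 2 : ℝ) : ℂ) = (((‖c‖ * norm2 p) ^ 2 : ℝ) : ℂ) := by
    rw [← pairing_self, pairing_smul_left, pairing_smul_right, pairing_self, ← mul_assoc,
      Complex.mul_conj']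
    push_cast
    ring
  exact (pow_left_inj₀ (norm2_nonneg _) (by positivity [norm2_nonneg p]) two_ne_zero).mp
    (by exact_mod_cast h)

lemma injOn_fst_antidiagonal {A : Type*} [AddMonoid A] [IsLeftCancelAdd A] [HasAntidiagonal A]
    (a : A) : Set.InjOn Prod.fst (antidiagonal a : Set (A × A)) := fun x hx y hy h =>
  Prod.ext h <| add_left_cancel <| by
    rw [HasAntidiagonal.mem_antidiagonal.mp hx, h, HasAntidiagonal.mem_antidiagonal.mp hy]

lemma injOn_snd_antidiagonal {A : Type*} [AddMonoid A] [IsRightCancelAdd A] [HasAntidiagonal A]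
    (a : A) : Set.InjOn Prod.snd (antidiagonal a : Set (A × A)) := fun x hx y hy h =>
  (Prod.ext · h) <| add_right_cancel <| by
    rw [HasAntidiagonal.mem_antidiagonal.mp hx, h, HasAntidiagonal.mem_antidiagonal.mp hy]

/-- Cauchy–Schwarz over the antidiagonal `β + γ = α`. -/
lemma norm_coeff_mul_le (f g : MvP d) (α : Fin d →₀ ℕ) :
    ‖(f * g).coeff α‖ ≤ norm2 f * norm2 g := by
  classical
  have hf : ∑ x ∈ antidiagonal α, ‖f.coeff x.1‖ ^ 2 ≤ norm2 f ^ 2 := by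
    rw [← sum_image (f := fun β => ‖f.coeff β‖ ^ 2) (injOn_fst_antidiagonal α)]
    exact sum_norm_coeff_sq_le f _
  have hg : ∑ x ∈ antidiagonal α, ‖g.coeff x.2‖ ^ 2 ≤ norm2 g ^ 2 := by
    rw [← sum_image (f := fun γ => ‖g.coeff γ‖ ^ 2) (injOn_snd_antidiagonal α)]
    exact sum_norm_coeff_sq_le g _
  rw [coeff_mul]
  calc ‖∑ x ∈ antidiagonal α, f.coeff x.1 * g.coeff x.2‖
      ≤ ∑ x ∈ antidiagonal α, ‖f.coeff x.1‖ * ‖g.coeff x.2‖ :=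
        norm_sum_le_of_le _ fun x _ => (norm_mul _ _).le
    _ ≤ √(∑ x ∈ antidiagonal α, ‖f.coeff x.1‖ ^ 2) *
          √(∑ x ∈ antidiagonal α, ‖g.coeff x.2‖ ^ 2) :=
        Real.sum_mul_le_sqrt_mul_sqrt _ _ _
    _ ≤ norm2 f * norm2 g :=
        mul_le_mul (Real.sqrt_le_iff.mpr ⟨norm2_nonneg f, hf⟩)
          (Real.sqrt_le_iff.mpr ⟨norm2_nonneg g, hg⟩) (Real.sqrt_nonneg _) (norm2_nonneg f)

lemma hatp_hatp (f : MvP d) : hatp (hatp f) = f := by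
  refine MvPolynomial.ext _ _ fun α => ?_
  simp [hatp, coeff_map]

lemma hatp_zero : hatp (0 : MvP d) = 0 := map_zero _

lemma hatp_add (f g : MvP d) : hatp (f + g) = hatp f + hatp g := map_add _ f g

lemma hatp_smul (c : ℂ) (f : MvP d) : hatp (c • f) = conj c • hatp f := by
  refine MvPolynomial.ext _ _ fun α => ?_
  simp [hatp, coeff_map]

lemma norm2_hatp (f : MvP d) : norm2 (hatp f) = norm2 f := by
  simp [norm2, hatp, support_map_of_injective _ (starRingEnd ℂ).injective, coeff_map]

lemma _root_.MvPolynomial.IsHomogeneous.smul {f : MvP d} {n : ℕ} (hf : f.IsHomogeneous n)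
    (c : ℂ) : (c • f).IsHomogeneous n := by
  rw [← mem_homogeneousSubmodule] at hf ⊢
  exact Submodule.smul_mem _ c hf

lemma _root_.MvPolynomial.IsHomogeneous.hatp {f : MvP d} {n : ℕ} (hf : f.IsHomogeneous n) :
    (hatp f).IsHomogeneous n :=
  IsHomogeneous.map hf _

end Pairing

section WeakProductNorm

variable {d k l : ℕ}

def wpSet (d k l : ℕ) (p : MvP d) : Set ℝ :=
  {x : ℝ | ∃ (m : ℕ) (f g : Fin m → MvP d),
    (∀ j, (f j).IsHomogeneous k) ∧ (∀ j, (g j).IsHomogeneous l) ∧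
    p = ∑ j, f j * g j ∧ x = ∑ j, norm2 (f j) * norm2 (g j)}

lemma wpNorm_eq_sInf (p : MvP d) : wpNorm d k l p = sInf (wpSet d k l p) := rfl

lemma sum_mem_wpSet {ι : Type*} [Fintype ι] {f g : ι → MvP d}
    (hf : ∀ i, (f i).IsHomogeneous k) (hg : ∀ i, (g i).IsHomogeneous l) :
    ∑ i, norm2 (f i) * norm2 (g i) ∈ wpSet d k l (∑ i, f i * g i) :=
  let e := (Fintype.equivFin ι).symm
  ⟨_, f ∘ e, g ∘ e, fun _ => hf _, fun _ => hg _, (e.sum_comp fun i => f i * g i).symm,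
    (e.sum_comp fun i => norm2 (f i) * norm2 (g i)).symm⟩

lemma mul_mem_wpSet {f g : MvP d} (hf : f.IsHomogeneous k) (hg : g.IsHomogeneous l) :
    norm2 f * norm2 g ∈ wpSet d k l (f * g) := by
  simpa using sum_mem_wpSet (ι := Unit) (fun _ => hf) (fun _ => hg)

lemma zero_mem_wpSet : (0 : ℝ) ∈ wpSet d k l 0 := by
  simpa using sum_mem_wpSet (ι := Empty) (f := Empty.elim) (g := Empty.elim) nofun nofun

lemma add_mem_wpSet {p p' : MvP d} {x y : ℝ} (hx : x ∈ wpSet d k l p) (hy : y ∈ wpSet d k l p') :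
    x + y ∈ wpSet d k l (p + p') := by
  obtain ⟨m, f, g, hf, hg, rfl, rfl⟩ := hx
  obtain ⟨m', f', g', hf', hg', rfl, rfl⟩ := hy
  simpa [Fintype.sum_sum_type] using
    sum_mem_wpSet (f := Sum.elim f f') (g := Sum.elim g g') (Sum.rec hf hf') (Sum.rec hg hg')

lemma smul_mem_wpSet (c : ℂ) {p : MvP d} {x : ℝ} (hx : x ∈ wpSet d k l p) :
    ‖c‖ * x ∈ wpSet d k l (c • p) := by
  obtain ⟨m, f, g, hf, hg, rfl, rfl⟩ := hx
  simpa [smul_sum, mul_sum, norm2_smul, smul_mul_assoc, mul_assoc] using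
    sum_mem_wpSet (f := fun j => c • f j) (g := g) (fun j => (hf j).smul c) hg

lemma wpSet_nonempty {p : MvP d} (hp : p.IsHomogeneous (k + l)) : (wpSet d k l p).Nonempty := by
  classical
  have split : ∀ α ∈ p.support, ∃ βγ : (Fin d →₀ ℕ) × (Fin d →₀ ℕ),
      βγ.1.degree = k ∧ βγ.2.degree = l ∧ βγ.1 + βγ.2 = α := by
    intro α hα
    have hα : α ∈ Finsupp.degree ⁻¹' ({k} + {l} : Set ℕ) := by
      rw [Set.singleton_add_singleton, Set.mem_preimage, Set.mem_singleton_iff,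
        Finsupp.degree_eq_weight_one]
      exact hp (mem_support_iff.mp hα)
    obtain ⟨β, hβ, γ, hγ, rfl⟩ := Finsupp.degree_preimage_add _ _ ▸ hα
    exact ⟨(β, γ), hβ, hγ, rfl⟩
  choose! s hsk hsl hs using split
  have hp_eq : ∑ α : p.support, monomial (s α).1 (p.coeff α) * monomial (s α).2 1 = p := by
    simp_rw [monomial_mul, mul_one, hs _ (Subtype.prop _)]
    rw [sum_coe_sort p.support fun α => monomial α (p.coeff α), support_sum_monomial_coeff]
  exact ⟨_, hp_eq ▸ sum_mem_wpSet (fun α : p.support => isHomogeneous_monomial _ (hsk _ α.2))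
    (fun α : p.support => isHomogeneous_monomial _ (hsl _ α.2))⟩

lemma wpSet_nonneg {p : MvP d} {x : ℝ} (hx : x ∈ wpSet d k l p) : 0 ≤ x := by
  obtain ⟨m, f, g, -, -, -, rfl⟩ := hx
  exact sum_nonneg fun j _ => mul_nonneg (norm2_nonneg _) (norm2_nonneg _)

lemma bddBelow_wpSet (p : MvP d) : BddBelow (wpSet d k l p) := ⟨0, fun _ => wpSet_nonneg⟩

lemma wpNorm_nonneg (p : MvP d) : 0 ≤ wpNorm d k l p := Real.sInf_nonneg fun _ => wpSet_nonneg

lemma wpNorm_zero : wpNorm d k l (0 : MvP d) = 0 :=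
  le_antisymm (csInf_le (bddBelow_wpSet 0) zero_mem_wpSet) (wpNorm_nonneg 0)

lemma wpNorm_mul_le {f g : MvP d} (hf : f.IsHomogeneous k) (hg : g.IsHomogeneous l) :
    wpNorm d k l (f * g) ≤ norm2 f * norm2 g :=
  csInf_le (bddBelow_wpSet _) (mul_mem_wpSet hf hg)

lemma wpNorm_add_le {p p' : MvP d} (hp : p.IsHomogeneous (k + l))
    (hp' : p'.IsHomogeneous (k + l)) :
    wpNorm d k l (p + p') ≤ wpNorm d k l p + wpNorm d k l p' := by
  rw [wpNorm_eq_sInf, wpNorm_eq_sInf, wpNorm_eq_sInf, ← csInf_add (wpSet_nonempty hp)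
    (bddBelow_wpSet p) (wpSet_nonempty hp') (bddBelow_wpSet p')]
  refine csInf_le_csInf (bddBelow_wpSet _) ((wpSet_nonempty hp).add (wpSet_nonempty hp')) ?_
  rintro _ ⟨x, hx, y, hy, rfl⟩
  exact add_mem_wpSet hx hy

lemma wpNorm_smul (c : ℂ) (p : MvP d) : wpNorm d k l (c • p) = ‖c‖ * wpNorm d k l p := by
  rcases eq_or_ne c 0 with rfl | hc
  · rw [zero_smul, wpNorm_zero, norm_zero, zero_mul]
  have hset : wpSet d k l (c • p) = ‖c‖ • wpSet d k l p := by
    refine Set.Subset.antisymm (fun x hx => ⟨‖c⁻¹‖ * x, ?_, ?_⟩) ?_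
    · simpa [inv_smul_smul₀ hc] using smul_mem_wpSet c⁻¹ hx
    · simp [hc]
    · rintro _ ⟨x, hx, rfl⟩
      exact smul_mem_wpSet c hx
  rw [wpNorm_eq_sInf, hset, Real.sInf_smul_of_nonneg (norm_nonneg c), smul_eq_mul, wpNorm_eq_sInf]

lemma norm_coeff_le_of_mem_wpSet {p : MvP d} {x : ℝ} (hx : x ∈ wpSet d k l p)
    (α : Fin d →₀ ℕ) : ‖p.coeff α‖ ≤ x := by
  obtain ⟨m, f, g, -, -, rfl, rfl⟩ := hx
  rw [coeff_sum]
  exact norm_sum_le_of_le _ fun j _ => norm_coeff_mul_le _ _ α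

lemma norm_coeff_le_wpNorm {p : MvP d} (hp : p.IsHomogeneous (k + l)) (α : Fin d →₀ ℕ) :
    ‖p.coeff α‖ ≤ wpNorm d k l p :=
  le_csInf (wpSet_nonempty hp) fun _ hx => norm_coeff_le_of_mem_wpSet hx α

end WeakProductNorm

/-- `P_{d,k+l}` normed by `‖·‖_{P_{d,k} ⊙ P_{d,l}}`. -/
def WeakProduct (d k l : ℕ) : Type := homogeneousSubmodule (Fin d) ℂ (k + l)

namespace WeakProduct

variable {d k l : ℕ}

instance : AddCommGroup (WeakProduct d k l) :=
  inferInstanceAs (AddCommGroup (homogeneousSubmodule (Fin d) ℂ (k + l)))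

instance : Module ℂ (WeakProduct d k l) :=
  inferInstanceAs (Module ℂ (homogeneousSubmodule (Fin d) ℂ (k + l)))

instance : FiniteDimensional ℂ (WeakProduct d k l) :=
  Module.Finite.iff_fg.mpr (homogeneousSubmodule_fg (Fin d) ℂ (k + l))

def poly : WeakProduct d k l →ₗ[ℂ] MvP d := (homogeneousSubmodule (Fin d) ℂ (k + l)).subtype

def mk (p : MvP d) (hp : p.IsHomogeneous (k + l)) : WeakProduct d k l :=
  (⟨p, hp⟩ : homogeneousSubmodule (Fin d) ℂ (k + l))

lemma poly_mk (p : MvP d) (hp : p.IsHomogeneous (k + l)) : poly (mk p hp) = p := rfl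

lemma isHomogeneous_poly (p : WeakProduct d k l) : (poly p).IsHomogeneous (k + l) :=
  (Subtype.prop p : _ ∈ homogeneousSubmodule (Fin d) ℂ (k + l))

lemma poly_injective : Function.Injective (poly : WeakProduct d k l → MvP d) :=
  Subtype.val_injective

instance : Norm (WeakProduct d k l) := ⟨fun p => wpNorm d k l (poly p)⟩

lemma norm_def (p : WeakProduct d k l) : ‖p‖ = wpNorm d k l (poly p) := rfl

lemma normedSpaceCore : NormedSpace.Core ℂ (WeakProduct d k l) where
  norm_nonneg p := wpNorm_nonneg (poly p)
  norm_smul c p := by rw [norm_def, norm_def, map_smul, wpNorm_smul]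
  norm_triangle p p' := by
    rw [norm_def, norm_def, norm_def, map_add]
    exact wpNorm_add_le (isHomogeneous_poly p) (isHomogeneous_poly p')
  norm_eq_zero_iff p := by
    refine ⟨fun h => poly_injective ?_, fun h => by rw [h, norm_def, map_zero, wpNorm_zero]⟩
    refine (map_zero poly).symm ▸ MvPolynomial.ext _ _ fun α => norm_le_zero_iff.mp ?_
    simpa [← norm_def, h] using norm_coeff_le_wpNorm (isHomogeneous_poly p) α

instance : NormedAddCommGroup (WeakProduct d k l) := .ofCore normedSpaceCore

instance : NormedSpace ℂ (WeakProduct d k l) := .ofCore normedSpaceCore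

end WeakProduct

section Duality

open WeakProduct Metric

variable {d k l : ℕ}

def pairingCLM (q : MvP d) : StrongDual ℂ (WeakProduct d k l) :=
  LinearMap.toContinuousLinearMap ((pairingₗ q).comp poly)

lemma pairingCLM_apply (q : MvP d) (p : WeakProduct d k l) :
    pairingCLM q p = pairing (poly p) q := rfl

def hanSet (d k l : ℕ) (q : MvP d) : Set ℝ :=
  {x : ℝ | ∃ f g : MvP d, f.IsHomogeneous k ∧ g.IsHomogeneous l ∧
    norm2 f ≤ 1 ∧ norm2 g ≤ 1 ∧ x = ‖pairing q (hatp f * g)‖}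

lemma hanNorm_eq_sSup_hanSet (q : MvP d) : hanNorm d (k + l) k q = sSup (hanSet d k l q) := by
  rw [hanNorm, Nat.add_sub_cancel_left]
  rfl

lemma hanNorm_nonneg (q : MvP d) : 0 ≤ hanNorm d (k + l) k q := by
  rw [hanNorm_eq_sSup_hanSet]
  exact Real.sSup_nonneg fun _ ⟨_, _, _, _, _, _, hx⟩ => hx ▸ norm_nonneg _

lemma le_norm_pairingCLM_of_mem_hanSet (q : MvP d) {x : ℝ} (hx : x ∈ hanSet d k l q) :
    x ≤ ‖(pairingCLM q : StrongDual ℂ (WeakProduct d k l))‖ := by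
  obtain ⟨f, g, hf, hg, hf1, hg1, rfl⟩ := hx
  have hfg := hf.hatp.mul hg
  calc ‖pairing q (hatp f * g)‖ = ‖pairingCLM q (mk _ hfg)‖ := norm_pairing_comm _ _
    _ ≤ ‖pairingCLM q‖ * ‖mk _ hfg‖ := (pairingCLM q).le_opNorm _
    _ ≤ ‖pairingCLM q‖ * 1 := by
        gcongr
        rw [norm_def, poly_mk]
        refine (wpNorm_mul_le hf.hatp hg).trans ?_
        rw [norm2_hatp]
        exact mul_le_one₀ hf1 (norm2_nonneg g) hg1
    _ = ‖pairingCLM q‖ := mul_one _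

/-- Normalising `f̂` and `g` shows that `|⟨f g, q⟩₂| / (‖f‖₂ ‖g‖₂)` lies in `hanSet`. -/
lemma norm_pairing_mul_le_hanNorm (q : MvP d) {f g : MvP d} (hf : f.IsHomogeneous k)
    (hg : g.IsHomogeneous l) :
    ‖pairing (f * g) q‖ ≤ hanNorm d (k + l) k q * (norm2 f * norm2 g) := by
  rcases eq_or_ne f 0 with rfl | hf0
  · simp [← pairingₗ_apply, norm2]
  rcases eq_or_ne g 0 with rfl | hg0
  · simp [← pairingₗ_apply, norm2]
  have ha : 0 < norm2 f := (norm2_nonneg f).lt_of_ne' (norm2_eq_zero_iff.not.mpr hf0)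
  have hb : 0 < norm2 g := (norm2_nonneg g).lt_of_ne' (norm2_eq_zero_iff.not.mpr hg0)
  set a := norm2 f
  set b := norm2 g
  have hmem : ‖pairing (f * g) q‖ / (a * b) ∈ hanSet d k l q := by
    refine ⟨((a⁻¹ : ℝ) : ℂ) • hatp f, ((b⁻¹ : ℝ) : ℂ) • g, hf.hatp.smul _, hg.smul _, ?_, ?_, ?_⟩
    · rw [norm2_smul, norm2_hatp, Complex.norm_real, Real.norm_of_nonneg (by positivity),
        inv_mul_cancel₀ ha.ne']
    · rw [norm2_smul, Complex.norm_real, Real.norm_of_nonneg (by positivity),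
        inv_mul_cancel₀ hb.ne']
    · rw [hatp_smul, hatp_hatp, Complex.conj_ofReal, smul_mul_smul_comm, pairing_smul_right,
        norm_mul, Complex.norm_conj, norm_pairing_comm, ← Complex.ofReal_mul, Complex.norm_real,
        Real.norm_of_nonneg (by positivity), div_eq_inv_mul, mul_inv]
  have hbdd : BddAbove (hanSet d k l q) := ⟨_, fun _ => le_norm_pairingCLM_of_mem_hanSet q⟩
  have := le_csSup hbdd hmem
  rwa [← hanNorm_eq_sSup_hanSet, div_le_iff₀ (by positivity)] at this

lemma norm_pairingCLM (q : MvP d) :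
    ‖(pairingCLM q : StrongDual ℂ (WeakProduct d k l))‖ = hanNorm d (k + l) k q := by
  refine le_antisymm (ContinuousLinearMap.opNorm_le_bound _ (hanNorm_nonneg q) fun p => ?_) ?_
  · rw [pairingCLM_apply, norm_def, wpNorm_eq_sInf, ← smul_eq_mul,
      ← Real.sInf_smul_of_nonneg (hanNorm_nonneg q)]
    refine le_csInf (wpSet_nonempty (isHomogeneous_poly p)).smul_set ?_
    rintro _ ⟨_, ⟨m, f, g, hf, hg, hp, rfl⟩, rfl⟩
    simp only [hp, ← pairingₗ_apply, map_sum, smul_eq_mul, mul_sum]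
    exact norm_sum_le_of_le _ fun j _ => norm_pairing_mul_le_hanNorm q (hf j) (hg j)
  · rw [hanNorm_eq_sSup_hanSet]
    exact Real.sSup_le (fun _ => le_norm_pairingCLM_of_mem_hanSet q) (norm_nonneg _)

/-- `pairing p (hatp m) = ∑_α p_α m_α` is bilinear, unlike `pairing`, so `toDual` applies to it;
`q = hatp m` then represents the functional `coeffForm m`. -/
def coeffForm : LinearMap.BilinForm ℂ (WeakProduct d k l) :=
  LinearMap.mk₂ ℂ (fun m p => pairing (poly p) (hatp (poly m)))
    (fun m m' p => by rw [map_add, hatp_add, pairing_add_right])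
    (fun c m p => by rw [map_smul, hatp_smul, pairing_smul_right, Complex.conj_conj, smul_eq_mul])
    (fun m p p' => by rw [map_add, pairing_add_left])
    (fun c m p => by rw [map_smul, pairing_smul_left, smul_eq_mul])

lemma coeffForm_apply (m p : WeakProduct d k l) :
    coeffForm m p = pairing (poly p) (hatp (poly m)) := rfl

lemma coeffForm_nondegenerate :
    (coeffForm : LinearMap.BilinForm ℂ (WeakProduct d k l)).Nondegenerate := by
  refine ⟨fun m hm => poly_injective ?_, fun p hp => poly_injective ?_⟩
  · have h := hm (mk _ (isHomogeneous_poly m).hatp)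
    rw [coeffForm_apply, poly_mk, pairing_self_eq_zero] at h
    rw [map_zero, ← hatp_hatp (poly m), h, hatp_zero]
  · have h := hp (mk _ (isHomogeneous_poly p).hatp)
    rw [coeffForm_apply, poly_mk, hatp_hatp, pairing_self_eq_zero] at h
    rw [h, map_zero]

lemma exists_pairingCLM_eq (φ : StrongDual ℂ (WeakProduct d k l)) :
    ∃ q : MvP d, q.IsHomogeneous (k + l) ∧ pairingCLM q = φ := by
  obtain ⟨m, hm⟩ := (coeffForm.toDual coeffForm_nondegenerate).surjective
    (φ : WeakProduct d k l →ₗ[ℂ] ℂ)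
  exact ⟨hatp (poly m), (isHomogeneous_poly m).hatp,
    ContinuousLinearMap.ext fun p => LinearMap.congr_fun hm p⟩

lemma hanNorm_eq_sSup (q : MvP d) :
    hanNorm d (k + l) k q = sSup {x : ℝ | ∃ h : MvP d, h.IsHomogeneous (k + l) ∧
      wpNorm d k l h ≤ 1 ∧ x = ‖pairing h q‖} := by
  rw [← norm_pairingCLM (l := l), ← ContinuousLinearMap.sSup_unitClosedBall_eq_norm]
  congr 1
  ext x
  constructor
  · rintro ⟨p, hp, rfl⟩
    exact ⟨poly p, isHomogeneous_poly p, mem_closedBall_zero_iff.mp hp, rfl⟩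
  · rintro ⟨h, hh, h1, rfl⟩
    exact ⟨mk h hh, mem_closedBall_zero_iff.mpr h1, rfl⟩

/-- The double-dual isometry, with every functional written as `⟨·, q⟩₂`. -/
lemma wpNorm_eq_sSup {h : MvP d} (hh : h.IsHomogeneous (k + l)) :
    wpNorm d k l h = sSup {x : ℝ | ∃ q : MvP d, q.IsHomogeneous (k + l) ∧
      hanNorm d (k + l) k q ≤ 1 ∧ x = ‖pairing h q‖} := by
  rw [← poly_mk h hh, ← norm_def, ← (NormedSpace.inclusionInDoubleDualLi ℂ).norm_map,
    ← ContinuousLinearMap.sSup_unitClosedBall_eq_norm]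
  congr 1
  ext x
  constructor
  · rintro ⟨φ, hφ, rfl⟩
    obtain ⟨q, hq, rfl⟩ := exists_pairingCLM_eq φ
    exact ⟨q, hq, norm_pairingCLM q ▸ mem_closedBall_zero_iff.mp hφ, rfl⟩
  · rintro ⟨q, hq, hq1, rfl⟩
    exact ⟨pairingCLM q, mem_closedBall_zero_iff.mpr ((norm_pairingCLM q).trans_le hq1), rfl⟩

end Duality

theorem hankel_weakProduct_duality_general (d n k : ℕ) (hk : k ≤ n) :
    (∀ q : MvP d, q.IsHomogeneous n →
      hanNorm d n k q =
        sSup {x : ℝ | ∃ h : MvP d, h.IsHomogeneous n ∧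
          wpNorm d k (n - k) h ≤ 1 ∧ x = ‖pairing h q‖}) ∧
    (∀ h : MvP d, h.IsHomogeneous n →
      wpNorm d k (n - k) h =
        sSup {x : ℝ | ∃ q : MvP d, q.IsHomogeneous n ∧
          hanNorm d n k q ≤ 1 ∧ x = ‖pairing h q‖}) := by
  obtain ⟨l, rfl⟩ := Nat.exists_eq_add_of_le hk
  rw [Nat.add_sub_cancel_left]
  exact ⟨fun q _ => hanNorm_eq_sSup q, fun h hh => wpNorm_eq_sSup hh⟩

/-- Lemma 2.1 (1): duality of `‖·‖_{Han_k}` and `‖·‖_{P_{d,k} ⊙ P_{d,n-k}}` on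
`P_{d,n}` with respect to the Cauchy pairing; in finite dimensions the two displayed
supremum formulas express that `q ↦ ⟨·,q⟩₂` is a conjugate-linear isometric
isomorphism in both directions. -/
theorem hankel_weakProduct_duality (d n k : ℕ) (hd : 1 ≤ d) (hn : 1 ≤ n)
    (hk : k ≤ n) :
    (∀ q : MvP d, q.IsHomogeneous n →
      hanNorm d n k q =
        sSup {x : ℝ | ∃ h : MvP d, h.IsHomogeneous n ∧
          wpNorm d k (n - k) h ≤ 1 ∧ x = ‖pairing h q‖}) ∧
    (∀ h : MvP d, h.IsHomogeneous n →
      wpNorm d k (n - k) h =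
        sSup {x : ℝ | ∃ q : MvP d, q.IsHomogeneous n ∧
          hanNorm d n k q ≤ 1 ∧ x = ‖pairing h q‖}) :=
  hankel_weakProduct_duality_general d n k hk

end WP
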